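/- arXiv:1404.0138 — 2 statements merged into one kernel-verified Lean document; each statement's English description precedes it below -/
import Mathlib

section
/- Let A ∈ ℝ^{m×m} and C ∈ ℝ^{m×c}. Then for every U ∈ ℝ^{c×c}, ‖A − C (C⁺ A (C⁺)ᵀ) Cᵀ‖_F ≤ ‖A − C U Cᵀ‖_F; that is, U = C⁺ A (C⁺)ᵀ minimizes ‖A − C U Cᵀ‖_F over all c×c matrices U. -/
open Matrix

/-- `P` is the Moore–Penrose pseudoinverse of `M`. -/
def IsMoorePenrose {m n : Type*} [Fintype m] [Fintype n]
    (M : Matrix m n ℝ) (P : Matrix n m ℝ) : Prop :=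
  M * P * M = M ∧ P * M * P = P ∧ (M * P)ᵀ = M * P ∧ (P * M)ᵀ = P * M

/-- The Frobenius norm of a real matrix. -/
noncomputable def frobNorm {m n : Type*} [Fintype m] [Fintype n]
    (M : Matrix m n ℝ) : ℝ :=
  Real.sqrt (∑ i, ∑ j, (M i j) ^ 2)

lemma sum_sq_eq_trace {a b : ℕ} (M : Matrix (Fin a) (Fin b) ℝ) :
    ∑ i, ∑ j, (M i j) ^ 2 = (Mᵀ * M).trace := by
  simp only [Matrix.trace, Matrix.diag, Matrix.mul_apply, Matrix.transpose_apply, sq]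
  exact Finset.sum_comm

/-- `U = C⁺ A (C⁺)ᵀ` minimizes `‖A − C U Cᵀ‖_F` over all
`c × c` matrices `U`. -/
theorem intersection_matrix_optimal {m c : ℕ}
    (A : Matrix (Fin m) (Fin m) ℝ) (C : Matrix (Fin m) (Fin c) ℝ)
    (Cp : Matrix (Fin c) (Fin m) ℝ) (hCp : IsMoorePenrose C Cp)
    (U : Matrix (Fin c) (Fin c) ℝ) :
    frobNorm (A - C * (Cp * A * Cpᵀ) * Cᵀ) ≤ frobNorm (A - C * U * Cᵀ) := by
  obtain ⟨h1, h2, h3, h4⟩ := hCp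
  set P : Matrix (Fin m) (Fin m) ℝ := C * Cp with hP
  have hPt : Pᵀ = P := h3
  have hPC : P * C = C := by rw [hP, Matrix.mul_assoc] at h1 ⊢; exact h1
  have hPP : P * P = P := by
    have e : P * C * Cp = P * P := by rw [Matrix.mul_assoc, ← hP]
    rw [← e, hPC, hP]
  have hCtP : Cᵀ * P = Cᵀ := by
    rw [← hPt, ← Matrix.transpose_mul, hPC]
  have hkey : C * (Cp * A * Cpᵀ) * Cᵀ = P * A * P := by
    have e : Cpᵀ * Cᵀ = P := by rw [← Matrix.transpose_mul, ← hP, hPt]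
    calc C * (Cp * A * Cpᵀ) * Cᵀ = (C * Cp) * A * (Cpᵀ * Cᵀ) := by
          simp only [Matrix.mul_assoc]
      _ = P * A * P := by rw [e, ← hP]
  set X : Matrix (Fin m) (Fin m) ℝ := A - P * A * P with hX
  set Y : Matrix (Fin m) (Fin m) ℝ := P * A * P - C * U * Cᵀ with hY
  have hXY : A - C * U * Cᵀ = X + Y := by rw [hX, hY]; abel
  have hPYP : P * Y * P = Y := by
    rw [hY, Matrix.mul_sub, Matrix.sub_mul]
    congr 1
    · calc P * (P * A * P) * P = (P * P) * A * (P * P) := by simp only [Matrix.mul_assoc]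
        _ = P * A * P := by rw [hPP]
    · calc P * (C * U * Cᵀ) * P = (P * C) * U * (Cᵀ * P) := by simp only [Matrix.mul_assoc]
        _ = C * U * Cᵀ := by rw [hPC, hCtP]
  have hPXP : P * X * P = 0 := by
    rw [hX, Matrix.mul_sub, Matrix.sub_mul]
    have e : P * (P * A * P) * P = P * A * P := by
      calc P * (P * A * P) * P = (P * P) * A * (P * P) := by simp only [Matrix.mul_assoc]
        _ = P * A * P := by rw [hPP]
    rw [e]
    simp
  have hsub : A - C * (Cp * A * Cpᵀ) * Cᵀ = X := by rw [hkey]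
  clear_value P X Y
  have horth : (Xᵀ * Y).trace = 0 := by
    have e1 : Xᵀ * Y = (Xᵀ * P * Y) * P := by
      conv_lhs => rw [← hPYP]
      simp only [Matrix.mul_assoc]
    have e2 : (P * X * P)ᵀ = P * Xᵀ * P := by
      simp only [Matrix.transpose_mul, hPt, Matrix.mul_assoc]
    rw [e1, Matrix.trace_mul_comm]
    have e3 : P * (Xᵀ * P * Y) = (P * Xᵀ * P) * Y := by simp only [Matrix.mul_assoc]
    rw [e3, ← e2, hPXP]
    simp
  have horth' : (Yᵀ * X).trace = 0 := by
    rw [← Matrix.trace_transpose, Matrix.transpose_mul, Matrix.transpose_transpose, horth]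
  rw [hsub, hXY, frobNorm, frobNorm]
  apply Real.sqrt_le_sqrt
  rw [sum_sq_eq_trace, sum_sq_eq_trace]
  have expand : ((X + Y)ᵀ * (X + Y)).trace
      = (Xᵀ * X).trace + (Yᵀ * Y).trace := by
    rw [Matrix.transpose_add, Matrix.add_mul, Matrix.mul_add, Matrix.mul_add]
    simp only [Matrix.trace_add, horth, horth']
    ring
  rw [expand]
  have hnn : 0 ≤ (Yᵀ * Y).trace := by
    rw [← sum_sq_eq_trace]
    positivity
  linarith
end

section
/- Let A be an m×m real symmetric matrix partitioned as A = [[W, A21ᵀ],[A21, A22]] where W is the top-left c×c block, and let C = [W; A21] ∈ ℝ^{m×c} be the first c columns of A. Then ‖A − C (C⁺ A (C⁺)ᵀ) Cᵀ‖_F ≤ ‖A − C W⁺ Cᵀ‖_F; that is, the modified Nyström approximation is at least as accurate (in Frobenius norm) as the standard Nyström approximation built from the same columns. -/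
open Matrix

namespace NystromAux

/-- The squared Frobenius sum equals `trace (Mᵀ * M)`. -/
lemma frobSq_eq_trace {m n : Type*} [Fintype m] [Fintype n] (M : Matrix m n ℝ) :
    ∑ i, ∑ j, (M i j) ^ 2 = (Mᵀ * M).trace := by
  simp only [Matrix.trace, Matrix.diag, Matrix.mul_apply, Matrix.transpose_apply, sq]
  exact Finset.sum_comm

lemma frobSq_nonneg {m n : Type*} [Fintype m] [Fintype n] (M : Matrix m n ℝ) :
    0 ≤ ∑ i, ∑ j, (M i j) ^ 2 :=
  Finset.sum_nonneg fun _ _ => Finset.sum_nonneg fun _ _ => sq_nonneg _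

/-- Key optimality lemma: `X = Cp * A * Cpᵀ` minimizes `‖A - C X Cᵀ‖_F²`. -/
lemma key {m c : Type*} [Fintype m] [Fintype c]
    (A : Matrix m m ℝ) (C : Matrix m c ℝ) (Cp : Matrix c m ℝ)
    (hCp : IsMoorePenrose C Cp) (X : Matrix c c ℝ) :
    ∑ i, ∑ j, ((A - C * (Cp * A * Cpᵀ) * Cᵀ) i j) ^ 2
      ≤ ∑ i, ∑ j, ((A - C * X * Cᵀ) i j) ^ 2 := by
  obtain ⟨h1, h2, h3, h4⟩ := hCp
  set P : Matrix m m ℝ := C * Cp with hP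
  have hPT : Pᵀ = P := h3
  have hPP : P * P = P := by
    rw [hP, Matrix.mul_assoc, ← Matrix.mul_assoc Cp C Cp, h2]
  have hPC : P * C = C := h1
  have hCT : Cᵀ * P = Cᵀ := by rw [← hPT, ← Matrix.transpose_mul, hPC]
  have h5 : Cpᵀ * Cᵀ = P := by rw [← Matrix.transpose_mul]; exact hPT
  have hMod : C * (Cp * A * Cpᵀ) * Cᵀ = P * A * P := by
    simp only [hP, Matrix.mul_assoc, h5]
  set N : Matrix m m ℝ := A - C * X * Cᵀ with hN
  set M : Matrix m m ℝ := A - P * A * P with hM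
  have hQ : P * (C * X * Cᵀ) * P = C * X * Cᵀ := by
    simp only [← Matrix.mul_assoc, hPC]
    rw [Matrix.mul_assoc (C * X) Cᵀ P, hCT]
  have hdecomp : N = M + P * N * P := by
    have : P * N * P = P * A * P - C * X * Cᵀ := by
      rw [hN, Matrix.mul_sub, Matrix.sub_mul, hQ]
    rw [this, hM, hN]; abel
  -- cross term vanishes
  have hcross : (Mᵀ * (P * N * P)).trace = 0 := by
    have hMT : Mᵀ = Aᵀ - P * Aᵀ * P := by
      rw [hM, Matrix.transpose_sub, Matrix.transpose_mul (P * A) P,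
        Matrix.transpose_mul P A, hPT, ← Matrix.mul_assoc]
    rw [hMT, Matrix.sub_mul, Matrix.trace_sub]
    have hPP2 : ∀ Y : Matrix m m ℝ, P * (P * Y) = P * Y := fun Y => by
      rw [← Matrix.mul_assoc, hPP]
    have : P * Aᵀ * P * (P * N * P) = P * (Aᵀ * (P * N * P)) := by
      simp only [Matrix.mul_assoc, hPP2]
    rw [this, Matrix.trace_mul_comm P (Aᵀ * (P * N * P))]
    have : Aᵀ * (P * N * P) * P = Aᵀ * (P * N * P) := by
      simp only [Matrix.mul_assoc, hPP]
    rw [this, sub_self]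
  have hsplit : (Nᵀ * N).trace = (Mᵀ * M).trace + ((P * N * P)ᵀ * (P * N * P)).trace := by
    have hQM : ((P * N * P)ᵀ * M).trace = 0 := by
      have : ((P * N * P)ᵀ * M)ᵀ = Mᵀ * (P * N * P) := by
        rw [Matrix.transpose_mul, Matrix.transpose_transpose]
      calc ((P * N * P)ᵀ * M).trace = ((P * N * P)ᵀ * M)ᵀ.trace := (Matrix.trace_transpose _).symm
        _ = (Mᵀ * (P * N * P)).trace := by rw [this]
        _ = 0 := hcross
    calc (Nᵀ * N).trace = ((M + P * N * P)ᵀ * (M + P * N * P)).trace := by rw [← hdecomp]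
      _ = (Mᵀ * M).trace + (Mᵀ * (P * N * P)).trace + ((P * N * P)ᵀ * M).trace
            + ((P * N * P)ᵀ * (P * N * P)).trace := by
          rw [Matrix.transpose_add, Matrix.add_mul, Matrix.mul_add, Matrix.mul_add,
            Matrix.trace_add, Matrix.trace_add, Matrix.trace_add]; ring
      _ = (Mᵀ * M).trace + ((P * N * P)ᵀ * (P * N * P)).trace := by
          rw [hcross, hQM]; ring
  rw [hMod, frobSq_eq_trace, frobSq_eq_trace, hsplit]
  have := frobSq_nonneg (P * N * P)
  rw [frobSq_eq_trace] at this
  linarith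

end NystromAux

/-- The modified Nyström approximation is at least as
accurate (in Frobenius norm) as the standard Nyström approximation built from
the same columns. -/
theorem modified_nystrom_better_than_standard {c r : ℕ}
    (W : Matrix (Fin c) (Fin c) ℝ) (A21 : Matrix (Fin r) (Fin c) ℝ)
    (A22 : Matrix (Fin r) (Fin r) ℝ) (hW : Wᵀ = W) (hA22 : A22ᵀ = A22)
    (A : Matrix (Fin c ⊕ Fin r) (Fin c ⊕ Fin r) ℝ)
    (hA : A = Matrix.fromBlocks W A21ᵀ A21 A22)
    (C : Matrix (Fin c ⊕ Fin r) (Fin c) ℝ)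
    (hC : C = Matrix.fromRows W A21)
    (Wp : Matrix (Fin c) (Fin c) ℝ) (hWp : IsMoorePenrose W Wp)
    (Cp : Matrix (Fin c) (Fin c ⊕ Fin r) ℝ) (hCp : IsMoorePenrose C Cp) :
    frobNorm (A - C * (Cp * A * Cpᵀ) * Cᵀ) ≤ frobNorm (A - C * Wp * Cᵀ) := by
  unfold frobNorm
  exact Real.sqrt_le_sqrt (NystromAux.key A C Cp hCp Wp)
end
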